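/- (Doubly-exponential decay of the SK decoding error, equation (10).) Let h, P, σ > 0, set S = P/σ² and C = (1/2)·log₂(1 + h²·S). Then for every natural number N ≥ 1 and every real R, 2·Q( √(12·h²·S·(1 + h²·S)^{N−1}) / 2^{N·R + 1} ) ≤ exp( −(3/2)·(h²·S/(1 + h²·S))·2^{2N·(C − R)} ). In particular, if R < C the right-hand side tends to zero doubly exponentially as N → ∞. -/

import Mathlib

/-!
For `t ≥ x ≥ 0` one has `t² ≥ x² + (t - x)²`, so shifting the Gaussian tail integral to the
origin gives `Q(x) ≤ e^{-x²/2} Q(0) = e^{-x²/2} / 2`. With `a = h²S` and `2^{2C} = 1 + a`, the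
squared argument of `Q` is exactly `3 a/(1+a) · 2^{2N(C-R)}`, which yields the bound; for
`R < C` the exponent `2^{2N(C-R)}` grows exponentially, so its negative exponential vanishes.
-/

open MeasureTheory Filter

/-- The Gaussian tail (Q-) function: `Q(x) = (1/√(2π)) ∫_x^∞ exp(-t²/2) dt`. -/
noncomputable def gaussianQ (x : ℝ) : ℝ :=
  (Real.sqrt (2 * Real.pi))⁻¹ * ∫ t in Set.Ici x, Real.exp (-t ^ 2 / 2)

open Set Real

lemma setIntegral_Ici_comp_sub_right {E : Type*} [NormedAddCommGroup E] [NormedSpace ℝ E]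
    (f : ℝ → E) (a c : ℝ) : ∫ t in Ici a, f (t - c) = ∫ u in Ici (a - c), f u := by
  have hpre : (· + c) ⁻¹' Ici a = Ici (a - c) := by
    ext u
    simp
  rw [← hpre, ← (measurePreserving_add_right volume c).setIntegral_preimage_emb
    (MeasurableEquiv.addRight c).measurableEmbedding]
  simp

lemma integral_Ici_zero_exp_neg_sq_div_two :
    ∫ t in Ici (0 : ℝ), exp (-t ^ 2 / 2) = √(2 * π) / 2 := by
  rw [integral_Ici_eq_integral_Ioi]
  convert integral_gaussian_Ioi (1 / 2) using 3 <;> ring_nf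

lemma integrable_exp_neg_sq_div_two : Integrable fun t : ℝ ↦ exp (-t ^ 2 / 2) := by
  simpa [neg_div, div_eq_inv_mul] using integrable_exp_neg_mul_sq (b := 1 / 2) (by norm_num)

lemma exp_neg_sq_div_two_le {x t : ℝ} (hx : 0 ≤ x) (hxt : x ≤ t) :
    exp (-t ^ 2 / 2) ≤ exp (-x ^ 2 / 2) * exp (-(t - x) ^ 2 / 2) := by
  rw [← exp_add, exp_le_exp]
  nlinarith [mul_nonneg hx (sub_nonneg.mpr hxt)]

theorem gaussianQ_le_half_exp {x : ℝ} (hx : 0 ≤ x) : gaussianQ x ≤ exp (-x ^ 2 / 2) / 2 := by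
  have htail : ∫ t in Ici x, exp (-t ^ 2 / 2) ≤ exp (-x ^ 2 / 2) * (√(2 * π) / 2) :=
    calc ∫ t in Ici x, exp (-t ^ 2 / 2)
        ≤ ∫ t in Ici x, exp (-x ^ 2 / 2) * exp (-(t - x) ^ 2 / 2) :=
          setIntegral_mono_on integrable_exp_neg_sq_div_two.integrableOn
            ((integrable_exp_neg_sq_div_two.comp_sub_right x).const_mul _).integrableOn
            measurableSet_Ici fun t ht ↦ exp_neg_sq_div_two_le hx ht
      _ = exp (-x ^ 2 / 2) * (√(2 * π) / 2) := by
          rw [integral_const_mul, setIntegral_Ici_comp_sub_right (fun u ↦ exp (-u ^ 2 / 2)),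
            sub_self, integral_Ici_zero_exp_neg_sq_div_two]
  have hsqrt : 0 < √(2 * π) := by positivity
  rw [gaussianQ, inv_mul_le_iff₀ hsqrt]
  linarith

lemma sk_threshold_sq_div_two {a : ℝ} (ha : 0 ≤ a) {N : ℕ} (hN : 1 ≤ N) (R : ℝ) :
    (√(12 * a * (1 + a) ^ (N - 1)) / (2 : ℝ) ^ ((N : ℝ) * R + 1)) ^ 2 / 2 =
      3 / 2 * (a / (1 + a)) * (2 : ℝ) ^ (2 * (N : ℝ) * (1 / 2 * logb 2 (1 + a) - R)) := by
  set q := (2 : ℝ) ^ ((N : ℝ) * R)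
  have hden : (2 : ℝ) ^ ((N : ℝ) * R + 1) = q * 2 := rpow_add_one two_ne_zero _
  have hrate :
      (2 : ℝ) ^ (2 * (N : ℝ) * (1 / 2 * logb 2 (1 + a) - R)) = (1 + a) ^ N / q ^ 2 := by
    have hexp : 2 * (N : ℝ) * (1 / 2 * logb 2 (1 + a) - R) =
        logb 2 (1 + a) * N - N * R * (2 : ℕ) := by
      push_cast
      ring
    rw [hexp, rpow_sub two_pos, rpow_mul_natCast zero_le_two, rpow_mul_natCast zero_le_two,
      rpow_logb two_pos (by norm_num) (by linarith)]
  have hpow : (1 + a) ^ N = (1 + a) ^ (N - 1) * (1 + a) := by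
    rw [← pow_succ, Nat.sub_add_cancel hN]
  rw [hden, hrate, hpow, div_pow, sq_sqrt (by positivity)]
  field_simp
  ring

lemma tendsto_exp_mul_rpow_of_neg {α : Type*} {l : Filter α} {c b : ℝ} (hc : c < 0)
    (hb : 1 < b) {u : α → ℝ} (hu : Tendsto u l atTop) :
    Tendsto (fun n ↦ exp (c * b ^ u n)) l (nhds 0) :=
  tendsto_exp_atBot.comp <|
    ((tendsto_rpow_atTop_of_base_gt_one b hb).comp hu).const_mul_atTop_of_neg hc

/-- Equation (10): doubly-exponential decay of the SK decoding error.
With `S = P/σ²` and `C = (1/2)·log₂(1 + h²·S)`, for every blocklength `N ≥ 1` and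
every rate `R`,
`2·Q(√(12·h²·S·(1+h²·S)^{N−1}) / 2^{N·R+1}) ≤ exp(−(3/2)·(h²·S/(1+h²·S))·2^{2N(C−R)})`;
in particular, if `R < C` the right-hand side tends to zero as `N → ∞`. -/
theorem sk_decoding_error_doubly_exponential (h P σ : ℝ) (hh : 0 < h) (hP : 0 < P)
    (hσ : 0 < σ) (S C : ℝ) (hS : S = P / σ ^ 2)
    (hC : C = (1 / 2) * Real.logb 2 (1 + h ^ 2 * S)) :
    (∀ N : ℕ, 1 ≤ N → ∀ R : ℝ,
      2 * gaussianQ (Real.sqrt (12 * h ^ 2 * S * (1 + h ^ 2 * S) ^ (N - 1)) /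
          (2 : ℝ) ^ ((N : ℝ) * R + 1)) ≤
        Real.exp (-(3 / 2) * (h ^ 2 * S / (1 + h ^ 2 * S)) *
          (2 : ℝ) ^ (2 * (N : ℝ) * (C - R)))) ∧
    (∀ R : ℝ, R < C →
      Tendsto (fun N : ℕ =>
          Real.exp (-(3 / 2) * (h ^ 2 * S / (1 + h ^ 2 * S)) *
            (2 : ℝ) ^ (2 * (N : ℝ) * (C - R)))) atTop (nhds 0)) := by
  have ha : 0 < h ^ 2 * S := by rw [hS]; positivity
  refine ⟨fun N hN R ↦ ?_, fun R hR ↦ ?_⟩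
  · rw [mul_assoc 12]
    set x := √(12 * (h ^ 2 * S) * (1 + h ^ 2 * S) ^ (N - 1)) / (2 : ℝ) ^ ((N : ℝ) * R + 1)
    calc 2 * gaussianQ x ≤ exp (-x ^ 2 / 2) := by
          linarith [gaussianQ_le_half_exp (x := x) (by positivity)]
      _ = _ := by
        rw [neg_div, sk_threshold_sq_div_two ha.le hN R, hC]
        ring_nf
  · have hc : -(3 / 2) * (h ^ 2 * S / (1 + h ^ 2 * S)) < 0 :=
      mul_neg_of_neg_of_pos (by norm_num) (by positivity)
    refine tendsto_exp_mul_rpow_of_neg hc one_lt_two ?_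
    exact tendsto_natCast_atTop_atTop.const_mul_atTop two_pos |>.atTop_mul_const (sub_pos.mpr hR)
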